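/- arXiv:1801.06770 — 7 statements merged into one kernel-verified Lean document; each statement's English description precedes it below -/
import Mathlib

section
/- If X ⊆ ℚ is a base (there exists N such that every rational is a sum of N elements of X), then for every prime p the set X is not p-adically bounded: the p-adic absolute values of elements of X are unbounded. -/
lemma padicNorm_pow_aux (p : ℕ) [Fact p.Prime] (k : ℕ) :
    padicNorm p ((p:ℚ) ^ k) = ((p:ℚ)⁻¹) ^ k := by
  induction k with
  | zero => simp [padicNorm.one]
  | succ n ih =>
    rw [pow_succ, pow_succ, padicNorm.mul, ih, padicNorm.padicNorm_p_of_prime]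

theorem stmt_2 (X : Set ℚ)
    (hbase : ∃ N : ℕ, 0 < N ∧ ∀ q : ℚ,
      ∃ f : Fin N → ℚ, (∀ i, f i ∈ X) ∧ q = ∑ i, f i)
    (p : ℕ) (hp : p.Prime) :
    ∀ B : ℚ, ∃ x ∈ X, B < padicNorm p x := by
  haveI : Fact p.Prime := ⟨hp⟩
  intro B
  by_contra hcon
  push_neg at hcon
  obtain ⟨N, hN, hrep⟩ := hbase
  -- pick k with B < p^k
  obtain ⟨k, hk⟩ := pow_unbounded_of_one_lt B (by exact_mod_cast hp.one_lt : (1:ℚ) < p)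
  set q : ℚ := ((p : ℚ) ^ k)⁻¹ with hq
  have hnorm : padicNorm p q = (p : ℚ) ^ k := by
    have hp0 : ((p:ℚ)^k) ≠ 0 := pow_ne_zero _ (by exact_mod_cast hp.ne_zero)
    rw [hq, ← one_div, padicNorm.div, padicNorm.one, padicNorm_pow_aux,
      inv_pow, one_div, inv_inv]
  obtain ⟨f, hf, hsum⟩ := hrep q
  have hle : padicNorm p q ≤ B := by
    rw [hsum]
    exact padicNorm.sum_le (Finset.univ_nonempty_iff.mpr ⟨⟨0, hN⟩⟩)
      (fun i _ ↦ hcon (f i) (hf i))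
  rw [hnorm] at hle
  exact absurd (hle.trans_lt hk) (lt_irrefl _)
end

section
/- If X is a positive base and X is unbounded below, then X is a base. -/
theorem stmt_3 (X : Set ℚ)
    (hpos : ∃ N : ℕ, 0 < N ∧ ∃ a : ℚ, ∀ q : ℚ, a < q →
      ∃ f : Fin N → ℚ, (∀ i, f i ∈ X) ∧ q = ∑ i, f i)
    (hunb : ∀ b : ℚ, ∃ x ∈ X, x < b) :
    ∃ N : ℕ, 0 < N ∧ ∀ q : ℚ,
      ∃ f : Fin N → ℚ, (∀ i, f i ∈ X) ∧ q = ∑ i, f i := by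
  obtain ⟨N, hN, a, ha⟩ := hpos
  refine ⟨N + 1, Nat.succ_pos _, fun q => ?_⟩
  obtain ⟨x, hxX, hxlt⟩ := hunb (q - a)
  obtain ⟨g, hg, hsum⟩ := ha (q - x) (by linarith)
  refine ⟨Fin.cons x g, fun i => Fin.cases hxX hg i, ?_⟩
  rw [Fin.sum_cons, ← hsum]
  ring
end

section
/- Let X, Y ⊆ ℚ with Y = X ∪ {y} for a single element y. If Y is a base, then X is a base. -/
private def RepQ (X : Set ℚ) (n : ℕ) (q : ℚ) : Prop :=
  ∃ f : Fin n → ℚ, (∀ i, f i ∈ X) ∧ q = ∑ i, f i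

private lemma repq_zero (X : Set ℚ) : RepQ X 0 0 :=
  ⟨fun _ => 0, fun i => i.elim0, by simp⟩

private lemma repq_congr {X n a b} (h : RepQ X n a) (hab : a = b) : RepQ X n b := hab ▸ h

private lemma repq_cast {X a} {n m : ℕ} (h : RepQ X n a) (hnm : n = m) : RepQ X m a := hnm ▸ h

private lemma repq_eq_zero {X q} (h : RepQ X 0 q) : q = 0 := by
  obtain ⟨f, _, hq⟩ := h; simpa using hq

private lemma repq_add {X : Set ℚ} {m n : ℕ} {a b : ℚ} (ha : RepQ X m a) (hb : RepQ X n b) :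
    RepQ X (m + n) (a + b) := by
  obtain ⟨f, hf, rfl⟩ := ha
  obtain ⟨g, hg, rfl⟩ := hb
  refine ⟨Fin.append f g, ?_, ?_⟩
  · intro i
    refine Fin.addCases (fun j => ?_) (fun j => ?_) i
    · simpa using hf j
    · simpa using hg j
  · rw [Fin.sum_univ_add]; simp

private lemma repq_nsmul {X : Set ℚ} {n : ℕ} {a : ℚ} (m : ℕ) (h : RepQ X n a) :
    RepQ X (m * n) ((m : ℚ) * a) := by
  induction m with
  | zero => simpa using repq_zero X
  | succ k ih =>
      have h1 : (k + 1) * n = k * n + n := by ring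
      have h2 : ((k + 1 : ℕ) : ℚ) * a = (k : ℚ) * a + a := by push_cast; ring
      rw [h1, h2]
      exact repq_add ih h

private lemma repq_const {X : Set ℚ} {x : ℚ} (n : ℕ) (hx : x ∈ X) :
    RepQ X n ((n : ℚ) * x) := by
  refine ⟨fun _ => x, fun _ => hx, ?_⟩
  simp [Finset.sum_const, mul_comm]

private lemma repq_finsum {X : Set ℚ} {w : ℕ} :
    ∀ {N : ℕ} (v : Fin N → ℚ), (∀ i, RepQ X w (v i)) → RepQ X (N * w) (∑ i, v i) := by
  intro N
  induction N with
  | zero => intro v _; simpa using repq_zero X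
  | succ k ih =>
      intro v hv
      have h1 := repq_add (ih (fun i => v i.succ) (fun i => hv i.succ)) (hv 0)
      have e1 : (k + 1) * w = k * w + w := by ring
      have e2 : ∑ i, v i = (∑ i : Fin k, v i.succ) + v 0 := by
        rw [Fin.sum_univ_succ]; ring
      rw [e1, e2]
      exact h1

private lemma repq_split {X : Set ℚ} {y : ℚ} {N : ℕ} (f : Fin N → ℚ)
    (hf : ∀ i, f i ∈ X ∪ {y}) :
    ∃ k c : ℕ, k + c = N ∧ RepQ X c (∑ i, f i - (k : ℚ) * y) := by
  classical
  set s : Finset (Fin N) := Finset.univ.filter (fun i => f i ∈ X) with hs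
  refine ⟨sᶜ.card, s.card, ?_, ?_⟩
  · rw [add_comm]
    simpa using Finset.card_add_card_compl s
  · have hsum : ∑ i, f i = ∑ i ∈ s, f i + ∑ i ∈ sᶜ, f i := (Finset.sum_add_sum_compl s f).symm
    have hys : ∀ i ∈ sᶜ, f i = y := by
      intro i hi
      have hnx : f i ∉ X := by simpa [hs] using (Finset.mem_compl.mp hi)
      rcases hf i with h | h
      · exact absurd h hnx
      · simpa using h
    have h2 : ∑ i ∈ sᶜ, f i = (sᶜ.card : ℚ) * y := by
      rw [Finset.sum_congr rfl hys, Finset.sum_const, nsmul_eq_mul]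
    have h3 : ∑ i, f i - (sᶜ.card : ℚ) * y = ∑ i ∈ s, f i := by
      rw [hsum, h2]; ring
    rw [h3]
    refine ⟨fun j => f (s.equivFin.symm j), fun j => ?_, ?_⟩
    · have hmem := (s.equivFin.symm j).2
      exact (Finset.mem_filter.mp hmem).2
    · rw [← Finset.sum_attach s f]
      exact (Equiv.sum_comp s.equivFin.symm (fun i : {x // x ∈ s} => f (i : Fin N))).symm

theorem stmt_4 (X : Set ℚ) (y : ℚ)
    (hbase : ∃ N : ℕ, 0 < N ∧ ∀ q : ℚ,
      ∃ f : Fin N → ℚ, (∀ i, f i ∈ X ∪ {y}) ∧ q = ∑ i, f i) :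
    ∃ N : ℕ, 0 < N ∧ ∀ q : ℚ,
      ∃ f : Fin N → ℚ, (∀ i, f i ∈ X) ∧ q = ∑ i, f i := by
  obtain ⟨N, hN, h⟩ := hbase
  -- Step A : (c₀+1) * y is a sum of c₀ elements of X
  obtain ⟨fA, hfA, eA⟩ := h (((N : ℚ) + 1) * y)
  obtain ⟨k₀, c₀, hk₀, repA0⟩ := repq_split fA hfA
  have hA : RepQ X c₀ (((c₀ : ℚ) + 1) * y) := by
    refine repq_congr repA0 ?_
    have hcast : (k₀ : ℚ) + (c₀ : ℚ) = (N : ℚ) := by exact_mod_cast hk₀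
    rw [← eA]
    linear_combination (-y) * hcast
  -- Step B : -(K) * y is a sum of C ≥ 1 elements of X
  obtain ⟨f1, hf1, e1⟩ := h 1
  obtain ⟨k₁, c₁, _, rep1⟩ := repq_split f1 hf1
  rw [← e1] at rep1
  obtain ⟨f2, hf2, e2⟩ := h (-1)
  obtain ⟨k₂, c₂, _, rep2⟩ := repq_split f2 hf2
  rw [← e2] at rep2
  have repB : RepQ X (c₁ + c₂) (-(((k₁ : ℚ) + (k₂ : ℚ)) * y)) := by
    refine repq_congr (repq_add rep1 rep2) ?_
    ring
  have hC : 0 < c₁ + c₂ := by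
    by_contra hc
    push_neg at hc
    interval_cases hc' : (c₁ + c₂)
    have hc₁ : c₁ = 0 := by omega
    have hc₂ : c₂ = 0 := by omega
    subst hc₁
    have h1' : (1 : ℚ) - (k₁ : ℚ) * y = 0 := repq_eq_zero rep1
    have h2' : (-1 : ℚ) - (k₂ : ℚ) * y = 0 := repq_eq_zero (repq_cast rep2 hc₂)
    have hk1 : (0 : ℚ) ≤ (k₁ : ℚ) := Nat.cast_nonneg _
    have hk2 : (0 : ℚ) ≤ (k₂ : ℚ) := Nat.cast_nonneg _
    nlinarith [mul_nonneg hk1 hk2, sq_nonneg y]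
  -- Step P : 0 is a sum of p ≥ 1 elements of X
  set K : ℕ := k₁ + k₂ with hK
  set p : ℕ := K * c₀ + (c₀ + 1) * (c₁ + c₂) with hp
  have repP : RepQ X p 0 := by
    have := repq_add (repq_nsmul K hA) (repq_nsmul (c₀ + 1) repB)
    refine repq_congr this ?_
    simp only [hK]
    push_cast
    ring
  have hp1 : 0 < p := by
    have : 0 < (c₀ + 1) * (c₁ + c₂) := Nat.mul_pos (Nat.succ_pos _) hC
    omega
  -- Step W : w * y is a sum of exactly w elements of X
  set w : ℕ := p * (c₀ + 1) with hw
  have repW : RepQ X w ((w : ℚ) * y) := by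
    have := repq_add (repq_nsmul p hA) repP
    refine repq_cast (repq_congr this ?_) ?_
    · simp only [hw]; push_cast; ring
    · rw [hw]; ring
  have hw1 : 0 < w := Nat.mul_pos hp1 (Nat.succ_pos _)
  -- Final step
  refine ⟨N * w, Nat.mul_pos hN hw1, fun q => ?_⟩
  obtain ⟨f, hf, hq⟩ := h (q / (w : ℚ))
  have key : ∀ i, RepQ X w ((w : ℚ) * f i) := by
    intro i
    rcases hf i with hx | hy
    · exact repq_const w hx
    · rw [Set.mem_singleton_iff] at hy
      rw [hy]
      exact repW
  have final := repq_finsum (fun i => (w : ℚ) * f i) key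
  have hval : ∑ i, (w : ℚ) * f i = q := by
    rw [← Finset.mul_sum, ← hq]
    field_simp
  exact repq_congr final hval
end

section
/- If X, Y ⊆ ℚ and both X \ Y and Y \ X are finite, then X is a base if and only if Y is a base. -/
/-!
Write `n • X` for the `n`-fold sumset, so that `X` is a base iff `N • X = univ` for some `N`; it
suffices to show that removing a finite set `F` from a base `X` leaves a base. If `n • X = univ`,
every rational is a sum of at most `n` elements of `X \ F` plus an element of the finite set
`E = n • (F ∪ {0})`. The additive monoid `M` generated by `X \ F` thus satisfies `M + E = ℚ`, so it
contains rationals of both signs; as any two rationals of opposite signs are commensurable, `M` is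
a group, and a subgroup of finite index in the divisible group `ℚ` is all of `ℚ`. Hence the
finitely many elements of `E` are sums of boundedly many elements of `X \ F`, so
`m • (X \ F ∪ {0}) = univ` for some `m`. Finally such a set is a base: `0` is a sum of `k` and
of `k + 1` of its elements for some `k`, so each summand `0` can be traded for `k + 1` summands.
-/

open Pointwise Set

theorem forall_exists_fin_sum_iff {G : Type*} [AddCommMonoid G] {X : Set G} {N : ℕ} :
    (∀ q : G, ∃ f : Fin N → G, (∀ i, f i ∈ X) ∧ q = ∑ i, f i) ↔ N • X = univ := by
  simp only [eq_univ_iff_forall, mem_nsmul_iff_sum, eq_comm]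

section AddMonoid

variable {G : Type*} [AddMonoid G] {X : Set G}

theorem exists_mem_nsmul_of_mem_closure {x : G} (hx : x ∈ AddSubmonoid.closure X) :
    ∃ n : ℕ, x ∈ n • X := by
  induction hx using AddSubmonoid.closure_induction with
  | mem x hx => exact ⟨1, by rwa [one_nsmul]⟩
  | zero => exact ⟨0, by simp⟩
  | add x y _ _ hx hy =>
    obtain ⟨m, hm⟩ := hx
    obtain ⟨n, hn⟩ := hy
    exact ⟨m + n, by rw [add_nsmul]; exact add_mem_add hm hn⟩

theorem Set.Finite.nsmul (hX : X.Finite) (n : ℕ) : (n • X).Finite := by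
  induction n with
  | zero => simp
  | succ n ih => rw [succ_nsmul]; exact ih.add hX

theorem insert_zero_subset_insert_zero_diff_add (F : Set G) :
    insert 0 X ⊆ insert 0 (X \ F) + insert 0 F := by
  intro x hx
  by_cases hxF : x ∈ F
  · exact ⟨0, mem_insert 0 _, x, mem_insert_of_mem 0 hxF, zero_add x⟩
  · refine ⟨x, ?_, 0, mem_insert 0 F, add_zero x⟩
    rcases hx with rfl | hx
    exacts [mem_insert 0 _, mem_insert_of_mem 0 ⟨hx, hxF⟩]

theorem nsmul_insert_zero_subset {m : ℕ} (hm : (0 : G) ∈ m • X) (hm' : (0 : G) ∈ (m + 1) • X)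
    (n : ℕ) : n • insert 0 X ⊆ (n * (m + 1)) • X := by
  rw [mul_comm, mul_nsmul]
  refine nsmul_subset_nsmul_left ?_
  rintro x (rfl | hx)
  · exact hm'
  · rw [succ_nsmul']
    exact ⟨x, hx, 0, hm, add_zero x⟩

end AddMonoid

section Field

variable {K : Type*} [Field K] [CharZero K]

theorem AddSubgroup.eq_top_of_coe_add_eq_univ {H : AddSubgroup K} {E : Set K} (hE : E.Finite)
    (h : (H : Set K) + E = univ) : H = ⊤ := by
  have : Finite (K ⧸ H) := by
    have := hE.to_subtype
    refine Finite.of_surjective (fun e : E ↦ (e : K ⧸ H)) ?_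
    rintro ⟨q⟩
    obtain ⟨a, ha, e, he, rfl⟩ := h ▸ mem_univ q
    exact ⟨⟨e, he⟩, QuotientAddGroup.eq.2 (by simpa using ha)⟩
  refine eq_top_iff.2 fun q _ ↦ ?_
  have hi : (H.index : K) ≠ 0 := Nat.cast_ne_zero.2 AddSubgroup.index_ne_zero_of_finite
  simpa [nsmul_eq_mul, mul_div_cancel₀ q hi] using H.nsmul_index_mem (q / H.index)

theorem exists_zero_mem_nsmul_and_succ {X : Set K} (hX : AddSubmonoid.closure X = ⊤) {x : K}
    (hx : x ∈ X) : ∃ m : ℕ, (0 : K) ∈ m • X ∧ (0 : K) ∈ (m + 1) • X := by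
  obtain ⟨c, hc⟩ := exists_mem_nsmul_of_mem_closure (hX ▸ AddSubmonoid.mem_top (-x))
  obtain ⟨j, hj⟩ := exists_mem_nsmul_of_mem_closure (hX ▸ AddSubmonoid.mem_top (x / (c + 1)))
  have hx' : x ∈ (j * (c + 1)) • X := by
    rw [mul_nsmul]
    simpa [nsmul_eq_mul, mul_div_cancel₀ x (Nat.cast_add_one_ne_zero c)] using
      nsmul_mem_nsmul (n := c + 1) hj
  have h0 : (0 : K) ∈ (c + 1) • X := by
    rw [succ_nsmul]
    exact ⟨-x, hc, x, hx, neg_add_cancel x⟩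
  -- `0 = x + (-x)`, and `0` is also `j + 1` copies of `-x + x`.
  refine ⟨j * (c + 1) + c, ?_, ?_⟩
  · rw [add_nsmul]
    exact ⟨x, hx', -x, hc, add_neg_cancel x⟩
  · rw [show j * (c + 1) + c + 1 = (c + 1) * (j + 1) by ring, mul_nsmul]
    exact zero_mem_nsmul h0

theorem pos_of_nsmul_eq_univ {S : Set K} {n : ℕ} (h : n • S = univ) : 0 < n := by
  refine Nat.pos_of_ne_zero ?_
  rintro rfl
  have h1 : (1 : K) ∈ (0 : ℕ) • S := h ▸ mem_univ 1
  simp at h1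

theorem exists_nsmul_eq_univ_of_nsmul_insert_zero_eq_univ {X : Set K} {n : ℕ}
    (h : n • insert 0 X = univ) : ∃ N : ℕ, 0 < N ∧ N • X = univ := by
  have hX : AddSubmonoid.closure X = ⊤ :=
    eq_top_iff.2 fun q _ ↦ AddSubmonoid.nsmul_subset
      (insert_subset (AddSubmonoid.zero_mem _) AddSubmonoid.subset_closure) (h ▸ mem_univ q)
  obtain ⟨x, hx⟩ : X.Nonempty := by
    refine nonempty_iff_ne_empty.2 fun hX₀ ↦ ?_
    simp [hX₀] at hX
  obtain ⟨m, hm, hm'⟩ := exists_zero_mem_nsmul_and_succ hX hx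
  have hN : (n * (m + 1)) • X = univ :=
    eq_univ_of_univ_subset (h ▸ nsmul_insert_zero_subset hm hm' n)
  exact ⟨_, pos_of_nsmul_eq_univ hN, hN⟩

end Field

theorem Rat.neg_mem_of_mul_neg {M : AddSubmonoid ℚ} {x y : ℚ} (hxM : x ∈ M) (hyM : y ∈ M)
    (hxy : x * y < 0) : -x ∈ M := by
  have hy₀ : y ≠ 0 := by rintro rfl; simp at hxy
  have ht : 0 < x / -y := by rw [div_neg, neg_pos]; exact div_neg_iff.2 (mul_neg_iff.1 hxy)
  set t := x / -y with ht_def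
  have hnum : ((t.num.toNat : ℕ) : ℚ) = t.num := by
    exact_mod_cast Int.toNat_of_nonneg (Rat.num_pos.2 ht).le
  have hden : (t.den : ℚ) * x = t.num.toNat * -y := by
    rw [hnum, ← Rat.mul_den_eq_num, ht_def]
    field_simp
  have : -x = (t.den - 1) • x + t.num.toNat • y := by
    rw [nsmul_eq_mul, nsmul_eq_mul, Nat.cast_sub t.den_pos]
    push_cast
    linarith
  rw [this]
  exact add_mem (nsmul_mem hxM _) (nsmul_mem hyM _)

theorem Rat.addSubmonoid_eq_top_of_coe_add_eq_univ {M : AddSubmonoid ℚ} {E : Set ℚ}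
    (hE : E.Finite) (h : (M : Set ℚ) + E = univ) : M = ⊤ := by
  obtain ⟨b, hb⟩ := hE.bddAbove
  obtain ⟨a, ha⟩ := hE.bddBelow
  obtain ⟨p, hp, e, he, hpe⟩ := h ▸ mem_univ (b + 1)
  obtain ⟨p', hp', e', he', hpe'⟩ := h ▸ mem_univ (a - 1)
  have hp0 : 0 < p := by linarith [hb he]
  have hp'0 : p' < 0 := by linarith [ha he']
  let H : AddSubgroup ℚ :=
    { M with
      neg_mem' := fun {x} hx ↦ by
        rcases lt_trichotomy x 0 with hx0 | rfl | hx0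
        · exact Rat.neg_mem_of_mul_neg hx hp (mul_neg_of_neg_of_pos hx0 hp0)
        · simp
        · exact Rat.neg_mem_of_mul_neg hx hp' (mul_neg_of_pos_of_neg hx0 hp'0) }
  have hH : H = ⊤ := AddSubgroup.eq_top_of_coe_add_eq_univ hE h
  exact eq_top_iff.2 fun q _ ↦ (hH ▸ AddSubgroup.mem_top q : q ∈ H)

theorem Rat.exists_nsmul_insert_zero_diff_eq_univ {X F : Set ℚ} {n : ℕ} (hF : F.Finite)
    (hX : n • insert 0 X = univ) : ∃ m : ℕ, m • insert 0 (X \ F) = univ := by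
  set E := n • insert 0 F
  have hE : E.Finite := (hF.insert 0).nsmul n
  have hsplit : univ ⊆ n • insert 0 (X \ F) + E := by
    rw [← hX, ← nsmul_add]
    exact nsmul_subset_nsmul_left (insert_zero_subset_insert_zero_diff_add F)
  set M := AddSubmonoid.closure (X \ F)
  have hM : M = ⊤ := by
    refine Rat.addSubmonoid_eq_top_of_coe_add_eq_univ hE (eq_univ_of_univ_subset ?_)
    exact hsplit.trans (add_subset_add_right (AddSubmonoid.nsmul_subset
      (insert_subset M.zero_mem AddSubmonoid.subset_closure)))
  choose k hk using fun e ↦ exists_mem_nsmul_of_mem_closure (hM ▸ AddSubmonoid.mem_top e)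
  obtain ⟨c, hc⟩ := (hE.image k).bddAbove
  refine ⟨n + c, eq_univ_of_univ_subset ?_⟩
  rw [add_nsmul]
  refine hsplit.trans (add_subset_add_left fun e he ↦ ?_)
  exact nsmul_subset_nsmul (subset_insert 0 _) (mem_insert 0 _) (hc ⟨e, he, rfl⟩) (hk e)

theorem Rat.exists_nsmul_eq_univ_of_diff_finite {X Y : Set ℚ} (h : (X \ Y).Finite)
    (hX : ∃ N : ℕ, 0 < N ∧ N • X = univ) : ∃ N : ℕ, 0 < N ∧ N • Y = univ := by
  obtain ⟨N, -, hN⟩ := hX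
  obtain ⟨m, hm⟩ := Rat.exists_nsmul_insert_zero_diff_eq_univ h
    (eq_univ_of_univ_subset (hN ▸ nsmul_subset_nsmul_left (subset_insert 0 X)))
  refine exists_nsmul_eq_univ_of_nsmul_insert_zero_eq_univ (n := m) (eq_univ_of_univ_subset ?_)
  rw [← hm, sdiff_sdiff_right_self]
  exact nsmul_subset_nsmul_left (insert_subset_insert inter_subset_right)

theorem stmt_5 (X Y : Set ℚ) (h1 : (X \ Y).Finite) (h2 : (Y \ X).Finite) :
    (∃ N : ℕ, 0 < N ∧ ∀ q : ℚ,
      ∃ f : Fin N → ℚ, (∀ i, f i ∈ X) ∧ q = ∑ i, f i) ↔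
    (∃ N : ℕ, 0 < N ∧ ∀ q : ℚ,
      ∃ f : Fin N → ℚ, (∀ i, f i ∈ Y) ∧ q = ∑ i, f i) := by
  simp only [forall_exists_fin_sum_iff]
  exact ⟨Rat.exists_nsmul_eq_univ_of_diff_finite h1, Rat.exists_nsmul_eq_univ_of_diff_finite h2⟩
end

section
/- Let f(x) = x^s for a positive integer s and define δf(x) = f(x+1) - f(x). Then applying δ exactly s-1 times to f yields the linear polynomial (δ^{s-1}f)(x) = s!·x + (s-1)·s!/2. -/
open Polynomial Finset

private noncomputable def δ (p : Polynomial ℚ) : Polynomial ℚ := p.comp (X + 1) - p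

private lemma delta_add (p q : ℚ[X]) : δ (p + q) = δ p + δ q := by
  simp [δ, add_comp]; ring

private lemma iter_add (n : ℕ) (p q : ℚ[X]) :
    δ^[n] (p + q) = δ^[n] p + δ^[n] q := by
  induction n generalizing p q with
  | zero => simp
  | succ n ih => simp [Function.iterate_succ_apply, delta_add, ih]

private lemma delta_Cmul (a : ℚ) (p : ℚ[X]) : δ (C a * p) = C a * δ p := by
  simp [δ, mul_comp]; ring

private lemma iter_Cmul (n : ℕ) (a : ℚ) (p : ℚ[X]) :
    δ^[n] (C a * p) = C a * δ^[n] p := by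
  induction n generalizing p with
  | zero => simp
  | succ n ih => simp [Function.iterate_succ_apply, delta_Cmul, ih]

private lemma natDegree_X_add_one : (X + 1 : ℚ[X]).natDegree = 1 := by
  simpa using natDegree_X_add_C (1 : ℚ)

private lemma delta_degree_lt (p : ℚ[X]) (hp : p ≠ 0) : (δ p).degree < p.degree := by
  rcases eq_or_ne (δ p) 0 with h | h
  · rw [h, degree_zero]
    exact bot_lt_iff_ne_bot.mpr (by simpa [degree_eq_bot] using hp)
  · have hlc : (p.comp (X + 1)).leadingCoeff = p.leadingCoeff := by
      rw [leadingCoeff_comp (by simp [natDegree_X_add_one])]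
      have h1 : (X + 1 : ℚ[X]).leadingCoeff = 1 := by
        simpa using leadingCoeff_X_add_C (1 : ℚ)
      simp [h1]
    have hne : p.comp (X + 1) ≠ 0 := by
      intro h0
      apply hp
      rw [← leadingCoeff_eq_zero, ← hlc, h0, leadingCoeff_zero]
    have hdeg : (p.comp (X + 1)).degree = p.degree := by
      rw [degree_eq_natDegree hne, degree_eq_natDegree hp, natDegree_comp,
        natDegree_X_add_one, mul_one]
    have := degree_sub_lt hdeg hne hlc
    simpa [δ, hdeg] using this

private lemma iter_zero (n : ℕ) : δ^[n] (0 : ℚ[X]) = 0 := by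
  induction n with
  | zero => simp
  | succ n ih => simp [Function.iterate_succ_apply, δ, ih]

private lemma iter_vanish (n : ℕ) (p : ℚ[X]) (h : p.degree < n) : δ^[n] p = 0 := by
  induction n generalizing p with
  | zero =>
    have : p = 0 := by
      rw [← degree_eq_bot]
      exact Nat.WithBot.lt_zero_iff.mp (by simpa using h)
    simp [this]
  | succ n ih =>
    rcases eq_or_ne p 0 with rfl | hp
    · exact iter_zero _
    · rw [Function.iterate_succ_apply]
      apply ih
      have h1 : (δ p).degree < p.degree := delta_degree_lt p hp
      have h2 : p.degree ≤ n := by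
        rw [degree_eq_natDegree hp] at h ⊢
        have : p.natDegree < n + 1 := by exact_mod_cast h
        exact_mod_cast Nat.lt_succ_iff.mp this
      exact lt_of_lt_of_le h1 h2

private lemma pow_sub_eq (n : ℕ) :
    ((X : ℚ[X]) + 1) ^ (n + 1) - X ^ (n + 1)
      = (∑ i ∈ range n, C (((n + 1).choose i : ℕ) : ℚ) * X ^ i)
        + C (((n + 1 : ℕ) : ℚ)) * X ^ n := by
  have h := add_pow (X : ℚ[X]) 1 (n + 1)
  rw [h, sum_range_succ, sum_range_succ]
  simp [Nat.choose_succ_self_right, mul_comm, C_eq_natCast]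

private lemma sum_degree_lt (k : ℕ) (f : ℕ → ℚ) :
    (∑ i ∈ range k, C (f i) * X ^ i : ℚ[X]).degree < (k : ℕ) := by
  apply lt_of_le_of_lt (degree_sum_le _ _)
  rw [Finset.sup_lt_iff (by exact_mod_cast WithBot.bot_lt_coe k)]
  intro i hi
  exact lt_of_le_of_lt (degree_C_mul_X_pow_le _ _)
    (by exact_mod_cast mem_range.mp hi)

private lemma delta_X_pow (n : ℕ) :
    δ ((X : ℚ[X]) ^ (n + 1))
      = (∑ i ∈ range n, C (((n + 1).choose i : ℕ) : ℚ) * X ^ i)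
        + C (((n + 1 : ℕ) : ℚ)) * X ^ n := by
  rw [← pow_sub_eq]
  simp [δ]

private lemma iter_fact (k : ℕ) : δ^[k] ((X : ℚ[X]) ^ k) = C (k.factorial : ℚ) := by
  induction k with
  | zero => simp
  | succ k ih =>
    rw [Function.iterate_succ_apply, delta_X_pow, iter_add, iter_Cmul, ih,
      iter_vanish _ _ (sum_degree_lt k _)]
    rw [← C_mul]
    push_cast [Nat.factorial_succ]
    ring

private lemma choose_fact (k : ℕ) :
    (((k + 2).choose k : ℕ) : ℚ) * 2 * (k.factorial : ℚ) = ((k + 2).factorial : ℚ) := by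
  have hsym : (k + 2).choose k = (k + 2).choose 2 := by
    have := Nat.choose_symm (show 2 ≤ k + 2 by omega) (n := k + 2)
    simpa using this
  have h := Nat.choose_mul_factorial_mul_factorial (show 2 ≤ k + 2 by omega)
  have : (k + 2).choose k * 2 * k.factorial = (k + 2).factorial := by
    rw [hsym]
    simpa [Nat.factorial, mul_comm, mul_assoc, mul_left_comm] using h
  exact_mod_cast this

private lemma key (k : ℕ) :
    δ^[k] ((X : ℚ[X]) ^ (k + 1))
      = C ((k + 1).factorial : ℚ) * X + C ((k : ℚ) * ((k + 1).factorial : ℚ) / 2) := by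
  induction k with
  | zero => simp
  | succ k ih =>
    rw [Function.iterate_succ_apply, delta_X_pow, sum_range_succ,
      iter_add, iter_add, iter_vanish _ _ (sum_degree_lt k _), iter_Cmul, iter_Cmul,
      iter_fact, ih]
    have hc := choose_fact k
    have hf : (((k + 2).factorial : ℕ) : ℚ) = ((k : ℚ) + 2) * ((k + 1).factorial : ℕ) := by
      push_cast [Nat.factorial_succ (k + 1)]
      ring
    apply Polynomial.funext
    intro x
    simp only [eval_add, eval_mul, eval_C, eval_X, eval_zero, zero_add]
    push_cast at hc hf ⊢
    linear_combination hc / 2 - (x + (k : ℚ) / 2) * hf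

theorem stmt_9 (s : ℕ) (hs : 0 < s) :
    (fun p : Polynomial ℚ => p.comp (Polynomial.X + 1) - p)^[s - 1]
      (Polynomial.X ^ s) =
    Polynomial.C (s.factorial : ℚ) * Polynomial.X +
      Polynomial.C (((s : ℚ) - 1) * (s.factorial : ℚ) / 2) := by
  obtain ⟨k, rfl⟩ : ∃ k, s = k + 1 := ⟨s - 1, (Nat.succ_pred_eq_of_pos hs).symm⟩
  have h := key k
  simp only [Nat.add_sub_cancel]
  rw [show (fun p : Polynomial ℚ => p.comp (Polynomial.X + 1) - p) = δ from rfl, h]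
  congr 1
  congr 1
  push_cast
  ring
end

section
/- Let K be a field of characteristic 0 and f ∈ K[x, x⁻¹] a non-constant Laurent polynomial. Then there exists a positive integer N such that every element c ∈ K can be written as c = Σ_{i=1}^N f(x_i) − Σ_{j=1}^N f(y_j) with x_i, y_j ∈ K*. -/
/-!
Let `B_N` be the set of differences `∑_{i<N} f(x_i) - ∑_{i<N} f(y_i)`, so that
`B_N + B_M ⊆ B_{N+M}` and `n • B_N ⊆ B_{|n| N}`. For `P ∈ ℤ[X]` with `P(1) = 0` and
`f = ∑ a_s X^s`, the combination `∑_k P_k f(2^k u) = ∑_s a_s P(2^s) u^s` lies in a fixed `B_N`.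
Taking `P` to vanish at `2^s` for every exponent `s ≠ s₀` of `f` and at `2^0 = 1`, where
`s₀ ≠ 0`, leaves the single monomial `b u^{s₀}`, hence `b u^m` with `m = |s₀|`. The same trick
applied to `b (1 + u)^m = ∑_j b (m choose j) u^j` isolates the linear term: `γ u` lies in a fixed
`B_N'` for all `u` outside a finite set, and every `c` is `γ u + γ v` with `u`, `v` outside it.
-/

open Finset Polynomial

section BalancedSums

variable {α G : Type*} [AddCommGroup G] (φ : α → G)

def balancedSums (N : ℕ) : Set G :=
  {c | ∃ x y : Fin N → α, c = ∑ i, φ (x i) - ∑ i, φ (y i)}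

variable {φ}

theorem zero_mem_balancedSums : (0 : G) ∈ balancedSums φ 0 :=
  ⟨Fin.elim0, Fin.elim0, by simp⟩

theorem sub_mem_balancedSums_one (a b : α) : φ a - φ b ∈ balancedSums φ 1 :=
  ⟨fun _ => a, fun _ => b, by simp⟩

theorem neg_mem_balancedSums {N : ℕ} {c : G} (hc : c ∈ balancedSums φ N) :
    -c ∈ balancedSums φ N := by
  obtain ⟨x, y, rfl⟩ := hc
  exact ⟨y, x, by abel⟩

theorem add_mem_balancedSums {N M : ℕ} {c d : G} (hc : c ∈ balancedSums φ N)
    (hd : d ∈ balancedSums φ M) : c + d ∈ balancedSums φ (N + M) := by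
  obtain ⟨x, y, rfl⟩ := hc
  obtain ⟨x', y', rfl⟩ := hd
  refine ⟨Fin.append x x', Fin.append y y', ?_⟩
  simp only [Fin.sum_univ_add, Fin.append_left, Fin.append_right]
  abel

theorem balancedSums_subset_succ [Nonempty α] (N : ℕ) :
    balancedSums φ N ⊆ balancedSums φ (N + 1) := fun _ hc => by
  simpa using add_mem_balancedSums hc (sub_mem_balancedSums_one (Classical.arbitrary α)
    (Classical.arbitrary α))

theorem balancedSums_mono [Nonempty α] : Monotone (balancedSums φ) :=
  monotone_nat_of_le_succ balancedSums_subset_succ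

theorem nsmul_mem_balancedSums {N : ℕ} {c : G} (hc : c ∈ balancedSums φ N) (n : ℕ) :
    n • c ∈ balancedSums φ (n * N) := by
  induction n with
  | zero => simpa using zero_mem_balancedSums
  | succ n ih => simpa [succ_nsmul, add_mul] using add_mem_balancedSums ih hc

theorem zsmul_mem_balancedSums {N : ℕ} {c : G} (hc : c ∈ balancedSums φ N) (n : ℤ) :
    n • c ∈ balancedSums φ (n.natAbs * N) := by
  obtain ⟨k, rfl | rfl⟩ := Int.eq_nat_or_neg n
  · simpa using nsmul_mem_balancedSums hc k
  · simpa using neg_mem_balancedSums (nsmul_mem_balancedSums hc k)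

theorem sum_zsmul_mem_balancedSums {ι : Type*} (t : Finset ι) (n : ι → ℤ) {c : ι → G}
    {N : ℕ} (hc : ∀ i ∈ t, c i ∈ balancedSums φ N) :
    ∑ i ∈ t, n i • c i ∈ balancedSums φ ((∑ i ∈ t, (n i).natAbs) * N) := by
  classical
  induction t using Finset.induction_on with
  | empty => simpa using zero_mem_balancedSums
  | insert a t ha ih =>
    rw [sum_insert ha, sum_insert ha, add_mul]
    exact add_mem_balancedSums (zsmul_mem_balancedSums (hc a (mem_insert_self a t)) (n a))
      (ih fun i hi => hc i (mem_insert_of_mem hi))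

theorem sum_zsmul_mem_balancedSums_of_sum_eq_zero [Nonempty α] {ι : Type*} (t : Finset ι)
    {n : ι → ℤ} (hn : ∑ i ∈ t, n i = 0) (x : ι → α) :
    ∑ i ∈ t, n i • φ (x i) ∈ balancedSums φ (∑ i ∈ t, (n i).natAbs) := by
  have a : α := Classical.ofNonempty
  have key : ∑ i ∈ t, n i • φ (x i) = ∑ i ∈ t, n i • (φ (x i) - φ a) := by
    simp only [smul_sub, sum_sub_distrib, ← sum_smul, hn, zero_smul, sub_zero]
  rw [key, ← mul_one (∑ i ∈ t, _)]
  exact sum_zsmul_mem_balancedSums t n fun i _ => sub_mem_balancedSums_one (x i) a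

end BalancedSums

theorem Finset.exists_add_eq_of_infinite {G : Type*} [AddCommGroup G] [Infinite G] [DecidableEq G]
    (E : Finset G) (c : G) : ∃ u v, u ∉ E ∧ v ∉ E ∧ u + v = c := by
  obtain ⟨u, hu⟩ := Infinite.exists_notMem_finset (E ∪ E.image (c - ·))
  refine ⟨u, c - u, fun h => hu (mem_union_left _ h), fun h => hu ?_, add_sub_cancel u c⟩
  exact mem_union_right _ (mem_image.mpr ⟨c - u, h, sub_sub_cancel c u⟩)

theorem Polynomial.exists_int_aeval_eq_zero_of_notMem (R : Finset ℚ) {q : ℚ} (hq : q ∉ R) :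
    ∃ P : ℤ[X], (∀ r ∈ R, aeval r P = 0) ∧ aeval q P ≠ 0 := by
  have root_iff (r x : ℚ) : aeval x ((r.den : ℤ[X]) * X - (r.num : ℤ[X])) = 0 ↔ x = r := by
    have hden : (r.den : ℚ) ≠ 0 := by exact_mod_cast r.den_nz
    simp only [map_sub, map_mul, aeval_X, map_natCast, map_intCast, sub_eq_zero]
    rw [← Rat.mul_den_eq_num r, mul_comm, mul_left_inj' hden]
  refine ⟨∏ r ∈ R, ((r.den : ℤ[X]) * X - (r.num : ℤ[X])), fun r hr => ?_, ?_⟩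
  · rw [map_prod]
    exact prod_eq_zero hr ((root_iff r r).mpr rfl)
  · rw [map_prod, prod_ne_zero_iff]
    exact fun r hr h => hq (((root_iff r q).mp h) ▸ hr)

theorem Polynomial.exists_int_aeval_two_zpow (S : Finset ℤ) (s₀ : ℤ) (K : Type*) [Field K]
    [CharZero K] : ∃ P : ℤ[X], aeval ((2 : K) ^ s₀) P ≠ 0 ∧
      ∀ s ∈ S, s ≠ s₀ → aeval ((2 : K) ^ s) P = 0 := by
  have hinj : Function.Injective fun s : ℤ => (2 : ℚ) ^ s :=
    zpow_right_injective₀ (by norm_num) (by norm_num)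
  obtain ⟨P, hroot, hq⟩ := exists_int_aeval_eq_zero_of_notMem
    ((S.erase s₀).image fun s => (2 : ℚ) ^ s) (q := 2 ^ s₀)
    (by simp only [mem_image, mem_erase]; exact fun ⟨s, ⟨hs, _⟩, h⟩ => hs (hinj h))
  have cast_aeval (s : ℤ) : aeval ((2 : K) ^ s) P = ((aeval ((2 : ℚ) ^ s) P : ℚ) : K) := by
    rw [← eq_ratCast (algebraMap ℚ K), ← aeval_algebraMap_apply]
    simp
  refine ⟨P, by rw [cast_aeval]; exact_mod_cast hq, fun s hs hne => ?_⟩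
  rw [cast_aeval, hroot _ (mem_image_of_mem _ (mem_erase.mpr ⟨hne, hs⟩)), Rat.cast_zero]

theorem Polynomial.sum_coeff_mul_zpow_mul {K : Type*} [Field K] (P : ℤ[X]) (l u : K) (s : ℤ) :
    ∑ k ∈ range (P.natDegree + 1), (P.coeff k : K) * (l ^ k * u) ^ s =
      aeval (l ^ s) P * u ^ s := by
  rw [aeval_eq_sum_range, sum_mul]
  refine sum_congr rfl fun k _ => ?_
  rw [zsmul_eq_mul, mul_zpow, ← zpow_natCast, ← zpow_mul, mul_comm (k : ℤ), zpow_mul,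
    zpow_natCast]
  ring

theorem Polynomial.sum_coeff_mul_pow_mul {R : Type*} [CommRing R] (P : ℤ[X]) (l u : R) (j : ℕ) :
    ∑ k ∈ range (P.natDegree + 1), (P.coeff k : R) * (l ^ k * u) ^ j =
      aeval (l ^ j) P * u ^ j := by
  rw [aeval_eq_sum_range, sum_mul]
  refine sum_congr rfl fun k _ => ?_
  rw [zsmul_eq_mul, mul_pow, ← pow_mul, mul_comm k, pow_mul]
  ring

theorem Polynomial.sum_coeff_mul_one_add_pow {R : Type*} [CommRing R] (P : ℤ[X]) (l x : R)
    (m : ℕ) : ∑ k ∈ range (P.natDegree + 1), (P.coeff k : R) * (1 + l ^ k * x) ^ m =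
      ∑ j ∈ range (m + 1), (m.choose j : R) * aeval (l ^ j) P * x ^ j := by
  simp_rw [add_comm (1 : R), add_pow, one_pow, mul_one, mul_sum]
  rw [sum_comm]
  refine sum_congr rfl fun j _ => ?_
  rw [mul_assoc, ← sum_coeff_mul_pow_mul, mul_sum]
  exact sum_congr rfl fun k _ => by ring

section Laurent

variable {K : Type*} [Field K]

theorem LaurentPolynomial.smeval_eq_sum_zpow (f : LaurentPolynomial K) (u : Kˣ) :
    f.smeval u = ∑ s ∈ f.coeff.support, f.coeff s * (u : K) ^ s := by
  simp [smeval_eq_sum, Finsupp.sum, Units.val_zpow_eq_zpow_val]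

theorem LaurentPolynomial.exists_mem_support_ne_zero {R : Type*} [Semiring R]
    (f : LaurentPolynomial R) (hf : ∀ c, f ≠ C c) : ∃ s ∈ f.coeff.support, s ≠ 0 := by
  by_contra! h
  refine hf (f.coeff 0) ?_
  have hsub : f.coeff.support ⊆ {0} := fun s hs => mem_singleton.mpr (h s hs)
  rw [← single_eq_C]
  exact AddMonoidAlgebra.coeff_injective (Finsupp.support_subset_singleton.mp hsub)

variable [CharZero K]

theorem LaurentPolynomial.exists_mul_zpow_mem_balancedSums (f : LaurentPolynomial K) {s₀ : ℤ}
    (hs₀ : s₀ ∈ f.coeff.support) (h0 : s₀ ≠ 0) :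
    ∃ N, ∃ b ≠ (0 : K), ∀ u : Kˣ,
      b * (u : K) ^ s₀ ∈ balancedSums (fun v : Kˣ => f.smeval v) N := by
  classical
  obtain ⟨P, hPs₀, hP⟩ := exists_int_aeval_two_zpow (insert 0 f.coeff.support) s₀ K
  refine ⟨∑ k ∈ range (P.natDegree + 1), (P.coeff k).natAbs,
    f.coeff s₀ * aeval ((2 : K) ^ s₀) P, mul_ne_zero (Finsupp.mem_support_iff.mp hs₀) hPs₀,
    fun u => ?_⟩
  have hsum : ∑ k ∈ range (P.natDegree + 1), P.coeff k = 0 := by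
    have h1 := hP 0 (mem_insert_self _ _) h0.symm
    rw [zpow_zero, aeval_eq_sum_range] at h1
    have h2 : ((∑ k ∈ range (P.natDegree + 1), P.coeff k : ℤ) : K) = 0 := by
      simpa using h1
    exact_mod_cast h2
  have key : ∑ k ∈ range (P.natDegree + 1),
      P.coeff k • f.smeval (Units.mk0 (2 : K) two_ne_zero ^ k * u) =
        f.coeff s₀ * aeval ((2 : K) ^ s₀) P * (u : K) ^ s₀ := by
    simp only [smeval_eq_sum_zpow, Units.val_mul, Units.val_pow_eq_pow_val, Units.val_mk0,
      zsmul_eq_mul, mul_sum]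
    rw [sum_comm, sum_eq_single s₀]
    · simp_rw [mul_left_comm _ (f.coeff s₀), ← mul_sum, sum_coeff_mul_zpow_mul]
      ring
    · intro s hs hne
      simp_rw [mul_left_comm _ (f.coeff s), ← mul_sum, sum_coeff_mul_zpow_mul,
        hP s (mem_insert_of_mem hs) hne, zero_mul, mul_zero]
    · exact fun h => absurd hs₀ h
  rw [← key]
  exact sum_zsmul_mem_balancedSums_of_sum_eq_zero _ hsum _

theorem LaurentPolynomial.exists_mul_pow_mem_balancedSums (f : LaurentPolynomial K)
    (hf : ∀ c, f ≠ C c) : ∃ N, ∃ b ≠ (0 : K), ∃ m, 0 < m ∧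
      ∀ u : Kˣ, b * (u : K) ^ m ∈ balancedSums (fun v : Kˣ => f.smeval v) N := by
  obtain ⟨s₀, hs₀, h0⟩ := f.exists_mem_support_ne_zero hf
  obtain ⟨N, b, hb, hmem⟩ := f.exists_mul_zpow_mem_balancedSums hs₀ h0
  refine ⟨N, b, hb, s₀.natAbs, Int.natAbs_pos.mpr h0, fun u => ?_⟩
  obtain ⟨m, rfl | rfl⟩ := Int.eq_nat_or_neg s₀
  · simpa using hmem u
  · simpa using hmem u⁻¹

theorem exists_mul_mem_balancedSums_of_mul_pow_mem {φ : Kˣ → K} {N m : ℕ} {b : K}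
    (hb : b ≠ 0) (hm : 0 < m) (h : ∀ u : Kˣ, b * (u : K) ^ m ∈ balancedSums φ N) :
    ∃ N', ∃ γ ≠ (0 : K), ∃ E : Finset K, ∀ x ∉ E, γ * x ∈ balancedSums φ N' := by
  classical
  obtain ⟨P, hP1, hP⟩ := exists_int_aeval_two_zpow (Icc 0 (m : ℤ)) 1 K
  rw [zpow_one] at hP1
  refine ⟨(∑ k ∈ range (P.natDegree + 1), (P.coeff k).natAbs) * N, b * m * aeval (2 : K) P,
    by simp [hb, hm.ne', hP1], (range (P.natDegree + 1)).image fun k => -((2 : K) ^ k)⁻¹,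
    fun x hx => ?_⟩
  have hunit : ∀ k ∈ range (P.natDegree + 1), 1 + (2 : K) ^ k * x ≠ 0 := by
    intro k hk h0
    refine hx (mem_image.mpr ⟨k, hk, ?_⟩)
    have h2 : (2 : K) ^ k ≠ 0 := pow_ne_zero k two_ne_zero
    field_simp
    linear_combination -h0
  have key : ∑ k ∈ range (P.natDegree + 1), P.coeff k • (b * (1 + (2 : K) ^ k * x) ^ m) =
      b * m * aeval (2 : K) P * x := by
    simp_rw [zsmul_eq_mul, mul_left_comm _ b, ← mul_sum, sum_coeff_mul_one_add_pow]
    rw [sum_eq_single 1]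
    · simp [mul_assoc]
    · intro j hj hne
      have := hP j (by simp only [mem_range, mem_Icc] at hj ⊢; omega) (by exact_mod_cast hne)
      rw [zpow_natCast] at this
      simp [this]
    · intro h
      simp only [mem_range] at h
      omega
  rw [← key]
  exact sum_zsmul_mem_balancedSums _ _ fun k hk => h (Units.mk0 _ (hunit k hk))

end Laurent

theorem stmt_13 (K : Type*) [Field K] [CharZero K] (f : LaurentPolynomial K)
    (hf : ∀ c : K, f ≠ LaurentPolynomial.C c) :
    ∃ N : ℕ, 0 < N ∧ ∀ c : K,
      ∃ x y : Fin N → K, (∀ i, x i ≠ 0) ∧ (∀ j, y j ≠ 0) ∧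
        c = ∑ i, (∑ s ∈ f.coeff.support, f.coeff s * x i ^ s)
              - ∑ j, (∑ s ∈ f.coeff.support, f.coeff s * y j ^ s) := by
  classical
  obtain ⟨N, b, hb, m, hm, hpow⟩ := f.exists_mul_pow_mem_balancedSums hf
  obtain ⟨N', γ, hγ, E, hlin⟩ := exists_mul_mem_balancedSums_of_mul_pow_mem hb hm hpow
  refine ⟨2 * N' + 1, by omega, fun c => ?_⟩
  obtain ⟨u, v, hu, hv, huv⟩ := Finset.exists_add_eq_of_infinite E (c / γ)
  have hc : c = γ * u + γ * v := by rw [← mul_add, huv, mul_div_cancel₀ _ hγ]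
  obtain ⟨x, y, hxy⟩ := balancedSums_mono (by omega : N' + N' ≤ 2 * N' + 1)
    (hc ▸ add_mem_balancedSums (hlin u hu) (hlin v hv))
  exact ⟨fun i => x i, fun j => y j, fun i => (x i).ne_zero, fun j => (y j).ne_zero,
    by simpa only [LaurentPolynomial.smeval_eq_sum_zpow] using hxy⟩
end

section
/- Let a, c ∈ ℚ be nonzero and let h(x) = a·x + c/x. Then there exists a positive integer N such that every rational number is a sum of N values h(x₁) + ... + h(x_N) with x_i ∈ ℚ*. -/
theorem stmt_15 (a c : ℚ) (ha : a ≠ 0) (hc : c ≠ 0) :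
    ∃ N : ℕ, 0 < N ∧ ∀ q : ℚ,
      ∃ x : Fin N → ℚ, (∀ i, x i ≠ 0) ∧ q = ∑ i, (a * x i + c / x i) := by
  refine ⟨6, by norm_num, fun q => ?_⟩
  by_cases hq : q = 0
  · refine ⟨fun i => if i.val % 2 = 0 then 1 else -1, ?_, ?_⟩
    · intro i
      by_cases h : i.val % 2 = 0 <;> simp [h]
    · subst hq
      rw [Fin.sum_univ_six]
      norm_num [show ((3:Fin 6):ℕ) = 3 from rfl, show ((4:Fin 6):ℕ) = 4 from rfl,
        show ((5:Fin 6):ℕ) = 5 from rfl]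
      ring
  · obtain ⟨t, ht⟩ : ∃ t : ℚ, t = q / (3 * a) := ⟨_, rfl⟩
    have h3a : (3 : ℚ) * a ≠ 0 := mul_ne_zero (by norm_num) ha
    have ht0 : t ≠ 0 := ht ▸ div_ne_zero hq h3a
    have ht2 : -t / 2 ≠ 0 := by
      intro h
      apply ht0
      linarith [h]
    refine ⟨fun i => if i.val % 3 = 2 then -t / 2 else t, ?_, ?_⟩
    · intro i
      by_cases h : i.val % 3 = 2 <;> simp only [h, if_true, if_false] <;> simpa
    · rw [Fin.sum_univ_six]
      norm_num [show ((3:Fin 6):ℕ) = 3 from rfl, show ((4:Fin 6):ℕ) = 4 from rfl,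
        show ((5:Fin 6):ℕ) = 5 from rfl]
      have h2 : (3:ℚ) * a * t = q := by
        rw [ht]
        field_simp
      rw [← h2]
      field_simp [ht0]
      ring
end
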